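/- arXiv:math/0506280 — 3 statements merged into one kernel-verified Lean document; each statement's English description precedes it below -/
import Mathlib

section
/- For a point p_x = 𝔽L(ξ_Q(x)) ∈ T*Q with momentum μ = J(p_x), the stabilizer of p_x under the cotangent-lifted G-action equals G_x ∩ G_μ, where G_x is the stabilizer of the base point x and G_μ is the stabilizer of μ under the coadjoint action. -/
open scoped RealInnerProductSpace

/-- For `p_x = 𝔽L(ξ_Q(x))` with momentum `μ = 𝕀(x)(ξ)`, the stabilizer of `p_x`
under the cotangent-lifted action equals `G_x ∩ G_μ`.  By equivariance of the
cotangent lift, `g` fixes `p_x` iff `g·x = x` and `(Ad_g ξ)_Q(x) = ξ_Q(x)`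
(injectivity of `𝔽L` on fibers); membership in `G_μ` is `μ ∘ Ad_g = μ`. -/
theorem stabilizer_eq_base_inter_momentum_stabilizer
    {G 𝔤 Q : Type*} [Group G] [MulAction G Q]
    [AddCommGroup 𝔤] [Module ℝ 𝔤]
    (V : Q → Type*) [∀ y, NormedAddCommGroup (V y)] [∀ y, InnerProductSpace ℝ (V y)]
    (Ad : G → 𝔤 ≃ₗ[ℝ] 𝔤)
    (gen : 𝔤 →ₗ[ℝ] (∀ y : Q, V y))
    (D : ∀ (g : G) (y : Q), V y ≃ₗᵢ[ℝ] V (g • y))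
    (hgen : ∀ (g : G) (ξ : 𝔤) (y : Q), D g y (gen ξ y) = gen (Ad g ξ) (g • y))
    (x : Q) (ξ : 𝔤)
    (μ : 𝔤 → ℝ) (hμ : ∀ η, μ η = ⟪gen ξ x, gen η x⟫) :
    ∀ g : G, (g • x = x ∧ gen (Ad g ξ) x = gen ξ x) ↔
      (g • x = x ∧ ∀ η : 𝔤, μ (Ad g η) = μ η) := by
  intro g
  constructor <;> rintro ⟨hx, h⟩ <;> refine ⟨hx, ?_⟩
  · -- key: inner products are preserved
    have key : ∀ α β : 𝔤, ⟪gen (Ad g α) x, gen (Ad g β) x⟫ = ⟪gen α x, gen β x⟫ := by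
      intro α β
      have h1 : ⟪gen (Ad g α) (g • x), gen (Ad g β) (g • x)⟫ = ⟪gen α x, gen β x⟫ := by
        rw [← hgen, ← hgen]
        exact (D g x).inner_map_map _ _
      rwa [hx] at h1
    intro η
    rw [hμ, hμ]; nth_rewrite 1 [← h]; rw [key]
  · have key : ∀ α β : 𝔤, ⟪gen (Ad g α) x, gen (Ad g β) x⟫ = ⟪gen α x, gen β x⟫ := by
      intro α β
      have h1 : ⟪gen (Ad g α) (g • x), gen (Ad g β) (g • x)⟫ = ⟪gen α x, gen β x⟫ := by
        rw [← hgen, ← hgen]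
        exact (D g x).inner_map_map _ _
      rwa [hx] at h1
    set a := gen (Ad g ξ) x with ha
    set b := gen ξ x with hb
    have hmix : ∀ η : 𝔤, ⟪b, gen (Ad g η) x⟫ = ⟪b, gen η x⟫ := by
      intro η
      rw [← hμ, ← hμ, h]
    have haa : ⟪a, a⟫ = ⟪b, b⟫ := key ξ ξ
    have hba : ⟪b, a⟫ = ⟪b, b⟫ := hmix ξ
    have hab : ⟪a, b⟫ = ⟪b, b⟫ := by rw [real_inner_comm]; exact hba
    have : ⟪a - b, a - b⟫ = 0 := by
      rw [inner_sub_sub_self, haa, hab, hba]; ring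
    have := inner_self_eq_zero.mp this
    exact sub_eq_zero.mp this
end

section
/- Let x be a critical point of the augmented potential V_{ξ⊥} and assume p_x = 𝔽L(ξ_Q(x)). Then for all λ ∈ 𝔤 with λ_Q(x) = 0 (i.e. λ ∈ 𝔥 = 𝔤_x), the derivative of the locked inertia tensor satisfies (D𝕀 · λ'_Q(x))(ξ⊥, λ) = 0 whenever λ' ∈ 𝔮^μ, where 𝔮^μ = {λ' ∈ 𝔱 : Proj_𝔥*[ad*_{λ'} μ] = 0} and μ = 𝕀(x)(ξ⊥). That is, Proj_𝔥*[(D𝕀 · λ'_Q(x))(ξ⊥)] = 0 for every λ' ∈ 𝔮^μ. -/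
/-- Lemma (admissible, item (i)): at a point `x` with stabilizer algebra
`𝔥 = ker 𝕀(x)`, for every `λ' ∈ 𝔮^μ` (i.e. `λ' ∈ 𝔱` with `⟨ad*_{λ'}μ, ζ⟩ = 0`
for all `ζ ∈ 𝔥`) one has `(D𝕀·λ'_Q(x))(ξ⊥, ζ) = 0` for all `ζ ∈ 𝔥`; that is,
the `𝔥`-component of `(D𝕀·λ'_Q(x))(ξ⊥)` vanishes.  Here `DI λ'` denotes the
derivative of the locked inertia tensor in the direction `λ'_Q(x)`, `hinv` is the
infinitesimal invariance of `𝕀`, and `μ = 𝕀(x)(ξ⊥)`. -/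
theorem qmu_derivative_annihilates_h
    {𝔤 : Type*} [AddCommGroup 𝔤] [Module ℝ 𝔤]
    (I : 𝔤 →ₗ[ℝ] 𝔤 →ₗ[ℝ] ℝ)
    (DI : 𝔤 → 𝔤 →ₗ[ℝ] 𝔤 →ₗ[ℝ] ℝ)     -- λ ↦ (D𝕀 · λ_Q(x))
    (br : 𝔤 →ₗ[ℝ] 𝔤 →ₗ[ℝ] 𝔤)           -- the Lie bracket
    (𝔥 𝔱 : Submodule ℝ 𝔤)
    (hker : ∀ ζ ∈ 𝔥, ∀ η : 𝔤, I ζ η = 0)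
    (hsym : ∀ a b : 𝔤, I a b = I b a)
    (hinv : ∀ lam ξ η : 𝔤, DI lam ξ η + I (br lam ξ) η + I ξ (br lam η) = 0)
    (ξp : 𝔤) (μ : 𝔤 →ₗ[ℝ] ℝ) (hμ : ∀ η, μ η = I ξp η)
    (lam' : 𝔤) (hlam' : lam' ∈ 𝔱)
    (hq : ∀ ζ ∈ 𝔥, μ (br lam' ζ) = 0) :   -- λ' ∈ 𝔮^μ
    ∀ ζ ∈ 𝔥, DI lam' ξp ζ = 0 := by
  intro ζ hζ
  have h := hinv lam' ξp ζ
  have h1 : I (br lam' ξp) ζ = 0 := by rw [hsym]; exact hker ζ hζ _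
  have h2 : I ξp (br lam' ζ) = 0 := by rw [← hμ]; exact hq ζ hζ
  linarith
end

section
/- For the sleeping Lagrange top, the restriction of the Hessian of the augmented potential V_{ξ⊥} at Λ = I to the slice 𝒮 = {ε̂I : ε ∈ span{e₁,e₂}} equals the scalar multiple ((k i₃ + i₃ − i)ζ²/(1+k)² − m g l) of the standard inner product on span{e₁,e₂}; hence it is positive definite if and only if ζ² > (1+k)² m g l/(k i₃ + i₃ − i) (assuming k i₃ + i₃ − i > 0). -/
open Matrix

/-- For the sleeping Lagrange top, the Hessian of the augmented potential at
`Λ = I`, restricted to the slice `𝒮 = {ε̂I : ε ∈ span{e₁,e₂}}` (i.e. `ε 2 = 0`),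
equals `((k i₃ + i₃ − i)ζ²/(1+k)² − m g l)` times the standard inner product;
hence it is positive definite iff `ζ² > (1+k)² m g l/(k i₃ + i₃ − i)`
(assuming `k i₃ + i₃ − i > 0`). -/
theorem sleeping_top_hessian_slice
    (m g l i i3 k ζ : ℝ) (hm : 0 < m) (hg : 0 < g) (hl : 0 < l)
    (hi : 0 < i) (hi3 : 0 < i3) (hk : 0 < k) (hpos : 0 < k * i3 + i3 - i)
    (E : Matrix (Fin 3) (Fin 3) ℝ) (hE : E = Matrix.diagonal ![i, i, i3])
    (e3 : Fin 3 → ℝ) (he3 : e3 = ![0, 0, 1])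
    (Hess : (Fin 3 → ℝ) → (Fin 3 → ℝ) → ℝ)
    (hHess : ∀ ε₁ ε₂ : Fin 3 → ℝ, Hess ε₁ ε₂ =
      ((crossProduct ε₁ e3) ⬝ᵥ (crossProduct ε₂ e3)) *
          ((k * i3 + i3) * ζ ^ 2 / (1 + k) ^ 2 - m * g * l)
        - ζ ^ 2 / (1 + k) ^ 2 *
          ((crossProduct ε₁ e3) ⬝ᵥ (E *ᵥ (crossProduct ε₂ e3)))) :
    (∀ ε₁ ε₂ : Fin 3 → ℝ, ε₁ 2 = 0 → ε₂ 2 = 0 →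
      Hess ε₁ ε₂ = ((k * i3 + i3 - i) * ζ ^ 2 / (1 + k) ^ 2 - m * g * l) * (ε₁ ⬝ᵥ ε₂)) ∧
    ((∀ ε : Fin 3 → ℝ, ε 2 = 0 → ε ≠ 0 → 0 < Hess ε ε) ↔
      ζ ^ 2 > (1 + k) ^ 2 * m * g * l / (k * i3 + i3 - i)) := by
  have hk2 : (0:ℝ) < (1 + k) ^ 2 := by positivity
  have main : ∀ ε₁ ε₂ : Fin 3 → ℝ, ε₁ 2 = 0 → ε₂ 2 = 0 →
      Hess ε₁ ε₂ = ((k * i3 + i3 - i) * ζ ^ 2 / (1 + k) ^ 2 - m * g * l) * (ε₁ ⬝ᵥ ε₂) := by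
    intro ε₁ ε₂ h1 h2
    rw [hHess, hE, he3]
    simp [crossProduct, dotProduct, mulVec, Fin.sum_univ_three, Matrix.diagonal, h1, h2]
    field_simp
    ring
  refine ⟨main, ?_⟩
  have key : (ζ ^ 2 > (1 + k) ^ 2 * m * g * l / (k * i3 + i3 - i)) ↔
      0 < (k * i3 + i3 - i) * ζ ^ 2 / (1 + k) ^ 2 - m * g * l := by
    rw [gt_iff_lt, div_lt_iff₀ hpos, sub_pos, lt_div_iff₀ hk2]
    constructor <;> intro h <;> nlinarith
  rw [key]
  constructor
  · intro h
    have h1 : (![1, 0, 0] : Fin 3 → ℝ) ≠ 0 := by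
      intro hne
      have : (![1, 0, 0] : Fin 3 → ℝ) 0 = 0 := by rw [hne]; rfl
      simp at this
    have := h ![1, 0, 0] (by simp) h1
    rw [main _ _ (by simp) (by simp)] at this
    simpa [dotProduct, Fin.sum_univ_three] using this
  · intro hc ε h2 hne
    rw [main ε ε h2 h2]
    have hor : ε 0 ≠ 0 ∨ ε 1 ≠ 0 := by
      by_contra h
      push_neg at h
      apply hne
      funext j
      fin_cases j <;> simp [h.1, h.2, h2]
    have hdp : 0 < ε ⬝ᵥ ε := by
      have : ε ⬝ᵥ ε = ε 0 * ε 0 + ε 1 * ε 1 := by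
        simp [dotProduct, Fin.sum_univ_three, h2]
      rw [this]
      rcases hor with h0 | h0
      · have := mul_self_pos.2 h0
        nlinarith [mul_self_nonneg (ε 1)]
      · have := mul_self_pos.2 h0
        nlinarith [mul_self_nonneg (ε 0)]
    exact mul_pos hc hdp
end
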